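/- arXiv:2201.10157 — 3 statements merged into one kernel-verified Lean document; each statement's English description precedes it below -/
import Mathlib

section
/- For the normalized SEIRS system with ν = 0 and R₀ = (β σ)/((γ+b)(σ+b)) > 1, the endemic infected fraction I* = ((R₀−1)/R₀)·(1/ζ), where ζ = ((γ+b)(σ+b)(ω+b) − ωγσ)/(σ b (ω+b)), satisfies 0 < I* < 1. -/
/-!
Writing `I* = x / ζ` with `x = (R₀ - 1) / R₀ = 1 - R₀⁻¹`, the hypothesis `R₀ > 1` puts `x` in
`(0, 1)`, so it suffices that `ζ ≥ 1`. This holds because the numerator of `ζ` exceeds its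
denominator by `b (γ (σ + ω + b) + b (ω + b)) > 0`.
-/

lemma seirs_zeta_num_sub_den {R : Type*} [CommRing R] (b γ σ ω : R) :
    ((γ + b) * (σ + b) * (ω + b) - ω * γ * σ) - σ * b * (ω + b) =
      b * (γ * (σ + ω + b) + b * (ω + b)) := by
  ring

section

variable {K : Type*} [Field K] [LinearOrder K] [IsStrictOrderedRing K]

lemma sub_one_div_self_mem_Ioo {R : K} (hR : 1 < R) : (R - 1) / R ∈ Set.Ioo 0 1 := by
  have hR₀ : 0 < R := zero_lt_one.trans hR
  exact ⟨div_pos (sub_pos.mpr hR) hR₀, (div_lt_one hR₀).mpr (sub_lt_self R one_pos)⟩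

lemma div_mem_Ioo_of_one_le {x ζ : K} (hx : x ∈ Set.Ioo 0 1) (hζ : 1 ≤ ζ) :
    x / ζ ∈ Set.Ioo 0 1 := by
  have hζ₀ : 0 < ζ := zero_lt_one.trans_le hζ
  exact ⟨div_pos hx.1 hζ₀, (div_lt_one hζ₀).mpr (hx.2.trans_le hζ)⟩

lemma one_lt_seirs_zeta {b γ σ ω : K} (hb : 0 < b) (hγ : 0 ≤ γ) (hσ : 0 < σ) (hω : 0 ≤ ω) :
    1 < ((γ + b) * (σ + b) * (ω + b) - ω * γ * σ) / (σ * b * (ω + b)) := by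
  rw [one_lt_div (by positivity), ← sub_pos, seirs_zeta_num_sub_den]
  positivity

end

theorem seirs_endemic_Istar_in_unit_interval_general (b β γ σ ω : ℝ)
    (hb : 0 < b) (hγ : 0 < γ) (hσ : 0 < σ) (hω : 0 < ω)
    (hR : (β * σ) / ((γ + b) * (σ + b)) > 1) :
    let R₀ := (β * σ) / ((γ + b) * (σ + b))
    let ζ := ((γ + b) * (σ + b) * (ω + b) - ω * γ * σ) / (σ * b * (ω + b))
    let Istar := ((R₀ - 1) / R₀) / ζ
    0 < Istar ∧ Istar < 1 :=
  div_mem_Ioo_of_one_le (sub_one_div_self_mem_Ioo hR)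
    (one_lt_seirs_zeta hb hγ.le hσ hω.le).le

theorem seirs_endemic_Istar_in_unit_interval (b β γ σ ω : ℝ)
    (hb : 0 < b) (hβ : 0 < β) (hγ : 0 < γ) (hσ : 0 < σ) (hω : 0 < ω)
    (hR : (β * σ) / ((γ + b) * (σ + b)) > 1) :
    let R₀ := (β * σ) / ((γ + b) * (σ + b))
    let ζ := ((γ + b) * (σ + b) * (ω + b) - ω * γ * σ) / (σ * b * (ω + b))
    let Istar := ((R₀ - 1) / R₀) / ζ
    0 < Istar ∧ Istar < 1 :=
  seirs_endemic_Istar_in_unit_interval_general b β γ σ ω hb hγ hσ hω hR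
end

section
/- With ν = 0 and R₀ > 1, the ratio φ := γω(R₀−1)/(β(ω+b) − γω) satisfies 0 < φ < 1, where R₀ = βσ/((γ+b)(σ+b)). -/
/-!
From `R₀ > 1`, i.e. `βσ > (γ + b)(σ + b) > (γ + b)σ`, one gets `β > γ + b`. This makes both the
numerator and the denominator `(β - γ)ω + βb` of `φ` positive. For `φ < 1` it remains to see
`γωR₀ < β(ω + b)`, which follows from `γR₀ < β`, a consequence of `σ / (σ + b) < 1` and
`γ / (γ + b) < 1`.
-/

noncomputable def reproductionNumber (b β γ σ : ℝ) : ℝ := β * σ / ((γ + b) * (σ + b))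

section

variable {b β γ σ : ℝ}

lemma add_lt_of_one_lt_reproductionNumber (hb : 0 < b) (hγ : 0 < γ) (hσ : 0 < σ)
    (hR : 1 < reproductionNumber b β γ σ) : γ + b < β := by
  have hD : 0 < (γ + b) * (σ + b) := by positivity
  have h : (γ + b) * (σ + b) < β * σ := by
    rwa [reproductionNumber, one_lt_div hD] at hR
  nlinarith

lemma mul_reproductionNumber_lt (hb : 0 < b) (hβ : 0 < β) (hγ : 0 < γ) (hσ : 0 < σ) :
    γ * reproductionNumber b β γ σ < β := by
  have hD : 0 < (γ + b) * (σ + b) := by positivity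
  rw [reproductionNumber, mul_div_assoc', div_lt_iff₀ hD]
  calc γ * (β * σ) < (γ + b) * (β * σ) := by gcongr; linarith
    _ < β * ((γ + b) * (σ + b)) := by nlinarith [mul_pos (add_pos hγ hb) hβ]

end

theorem phi_in_unit_interval_general (b β γ σ ω : ℝ)
    (hb : 0 < b) (hγ : 0 < γ) (hσ : 0 < σ) (hω : 0 < ω)
    (hR : β * σ / ((γ + b) * (σ + b)) > 1) :
    let R₀ := β * σ / ((γ + b) * (σ + b))
    let φ := γ * ω * (R₀ - 1) / (β * (ω + b) - γ * ω)
    0 < φ ∧ φ < 1 := by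
  intro R₀ φ
  have hβγ : γ + b < β := add_lt_of_one_lt_reproductionNumber hb hγ hσ hR
  have hβ : 0 < β := by linarith
  have hden : 0 < β * (ω + b) - γ * ω := by nlinarith
  have hγR : γ * R₀ < β := mul_reproductionNumber_lt hb hβ hγ hσ
  constructor
  · exact div_pos (mul_pos (mul_pos hγ hω) (sub_pos.2 hR)) hden
  · rw [div_lt_one hden]
    nlinarith

theorem phi_in_unit_interval (b β γ σ ω : ℝ)
    (hb : 0 < b) (hβ : 0 < β) (hγ : 0 < γ) (hσ : 0 < σ) (hω : 0 < ω)
    (hR : β * σ / ((γ + b) * (σ + b)) > 1) :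
    let R₀ := β * σ / ((γ + b) * (σ + b))
    let φ := γ * ω * (R₀ - 1) / (β * (ω + b) - γ * ω)
    0 < φ ∧ φ < 1 :=
  phi_in_unit_interval_general b β γ σ ω hb hγ hσ hω hR
end

section
/- In the scalar logistic-type output equation ẏ = (β − (μ+γ) − (β/α)y)·y: if y : ℝ → (0,∞) is a solution with ẏ(t) ≠ 0, then −(1/ẏ(t))·(d/dt)(ẏ/y)(t) = β/α and (ẏ/y)(t) + μ + (β/α)y(t) = β − γ. Hence β/α and β − γ are determined by y. -/
/-! Along a nonvanishing solution of `ẏ = (r - k y) y` the logarithmic derivative is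
`ẏ / y = r - k y`, an affine function of `y`; differentiating once more gives
`(ẏ / y)' = -k ẏ`, so `k` is read off wherever `ẏ ≠ 0`, and then `r` from `ẏ / y + k y`. -/

section Logistic

variable {r k : ℝ} {y : ℝ → ℝ}

theorem logDeriv_eq_of_hasDerivAt_logistic (hne : ∀ t, y t ≠ 0)
    (hy : ∀ t, HasDerivAt y ((r - k * y t) * y t) t) :
    logDeriv y = fun t => r - k * y t := by
  funext t
  rw [logDeriv_apply, (hy t).deriv, mul_div_cancel_right₀ _ (hne t)]

theorem hasDerivAt_logDeriv_of_logistic (hne : ∀ t, y t ≠ 0)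
    (hy : ∀ t, HasDerivAt y ((r - k * y t) * y t) t) (t : ℝ) :
    HasDerivAt (logDeriv y) (-(k * deriv y t)) t := by
  rw [logDeriv_eq_of_hasDerivAt_logistic hne hy, (hy t).deriv]
  exact ((hy t).const_mul k).const_sub r

end Logistic

theorem logistic_output_identifiability_general (α β γ μ : ℝ) (y : ℝ → ℝ)
    (hypos : ∀ t, 0 < y t)
    (hy : ∀ t, HasDerivAt y ((β - (μ + γ) - (β / α) * y t) * y t) t) :
    ∀ t, deriv y t ≠ 0 →
      (-(1 / deriv y t)) * deriv (fun s => deriv y s / y s) t = β / α ∧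
      deriv y t / y t + μ + (β / α) * y t = β - γ := by
  intro t ht
  have hne : ∀ s, y s ≠ 0 := fun s => (hypos s).ne'
  have hlog : deriv y t / y t = β - (μ + γ) - β / α * y t :=
    congrFun (logDeriv_eq_of_hasDerivAt_logistic hne hy) t
  have hlog' : deriv (fun s => deriv y s / y s) t = -(β / α * deriv y t) :=
    (hasDerivAt_logDeriv_of_logistic hne hy t).deriv
  constructor
  · rw [hlog']
    field_simp
  · rw [hlog]
    ring

theorem logistic_output_identifiability (α β γ μ : ℝ) (y : ℝ → ℝ)
    (hα0 : 0 < α) (hα1 : α ≤ 1) (hβ : 0 < β) (hγ : 0 < γ) (hμ : 0 < μ)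
    (hypos : ∀ t, 0 < y t)
    (hy : ∀ t, HasDerivAt y ((β - (μ + γ) - (β / α) * y t) * y t) t)
    (hy2 : Differentiable ℝ (deriv y)) :
    ∀ t, deriv y t ≠ 0 →
      (-(1 / deriv y t)) * deriv (fun s => deriv y s / y s) t = β / α ∧
      deriv y t / y t + μ + (β / α) * y t = β - γ :=
  logistic_output_identifiability_general α β γ μ y hypos hy
end
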